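/- With the James-space construction below, for every x ∈ J_K the L¹ norm of π(x) satisfies ‖π(x)‖_{L¹(μ)} = d*(|x|) ≤ B·‖x‖_J. -/

import Mathlib

open Filter MeasureTheory

/-- The set of candidate values whose supremum (times `1/√2`) defines the James norm. -/
def jamesSet (x : ℕ → ℝ) : Set ℝ :=
  {r : ℝ | ∃ (m : ℕ) (p : Fin (m + 1) → ℕ), StrictMono p ∧
    r = Real.sqrt ((∑ i : Fin m, (x (p i.castSucc) - x (p i.succ)) ^ 2)
      + (x (p (Fin.last m)) - x (p 0)) ^ 2)}

/-- The James norm of a sequence. -/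
noncomputable def jamesNorm (x : ℕ → ℝ) : ℝ :=
  (Real.sqrt 2)⁻¹ * sSup (jamesSet x)

/-- `d_n = Σ_{j≤n} e_j = (1,…,1,0,…)` with `n+1` leading ones. -/
def dSeq (n : ℕ) : ℕ → ℝ := fun j => if j ≤ n then 1 else 0

/-- `|x| = Σ_{i≤K} |γ*_i(x)|·ω_i`, the lattice absolute value induced by a basis
`ω` with coordinate functionals `γ`. -/
noncomputable def absVec (K : ℕ) (ω : Fin (K + 1) → ℕ → ℝ)
    (γ : Fin (K + 1) → (ℕ → ℝ) →ₗ[ℝ] ℝ) (x : ℕ → ℝ) : ℕ → ℝ :=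
  ∑ i, |γ i x| • ω i

/-- `d = Σ_{j≤K} 2^{−j−1}·|d_j|`. -/
noncomputable def dElt (K : ℕ) (ω : Fin (K + 1) → ℕ → ℝ)
    (γ : Fin (K + 1) → (ℕ → ℝ) →ₗ[ℝ] ℝ) : ℕ → ℝ :=
  ∑ j : Fin (K + 1), ((2 : ℝ) ^ ((j : ℕ) + 1))⁻¹ • absVec K ω γ (dSeq j)

/-- `d* = Σ_{j≤K} 2^{−j−1}·|e*_j|`, as a function on sequences; here
`|e*_j|(x) = Σ_{i≤K} γ*_i(x)·|e*_j(ω_i)| = Σ_{i≤K} γ*_i(x)·|ω_i(j)|`. -/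
noncomputable def dStar (K : ℕ) (ω : Fin (K + 1) → ℕ → ℝ)
    (γ : Fin (K + 1) → (ℕ → ℝ) →ₗ[ℝ] ℝ) (x : ℕ → ℝ) : ℝ :=
  ∑ j : Fin (K + 1), ((2 : ℝ) ^ ((j : ℕ) + 1))⁻¹ * (∑ i, γ i x * |ω i (j : ℕ)|)

/-- The probability measure on `Ω = {0,…,K}` given by
`μ({i}) = γ*_i(d)·d*(ω_i)/d*(d)`. -/
noncomputable def jMeasure (K : ℕ) (ω : Fin (K + 1) → ℕ → ℝ)
    (γ : Fin (K + 1) → (ℕ → ℝ) →ₗ[ℝ] ℝ) : Measure (Fin (K + 1)) :=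
  ∑ i : Fin (K + 1),
    (ENNReal.ofReal (γ i (dElt K ω γ) * dStar K ω γ (ω i) / dStar K ω γ (dElt K ω γ))) •
      Measure.dirac i

/-- The embedding `π : J_K → L¹(Ω,μ)`, `π(x)(i) = (d*(d)/γ*_i(d))·γ*_i(x)`. -/
noncomputable def jPi (K : ℕ) (ω : Fin (K + 1) → ℕ → ℝ)
    (γ : Fin (K + 1) → (ℕ → ℝ) →ₗ[ℝ] ℝ) (x : ℕ → ℝ) : Fin (K + 1) → ℝ :=
  fun i => (dStar K ω γ (dElt K ω γ) / γ i (dElt K ω γ)) * γ i x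

/-- The embedding `π* : J_K* → L¹(Ω,μ)`, `π*(x*)(i) = (d*(d)/d*(ω_i))·x*(ω_i)`. -/
noncomputable def jPiStar (K : ℕ) (ω : Fin (K + 1) → ℕ → ℝ)
    (γ : Fin (K + 1) → (ℕ → ℝ) →ₗ[ℝ] ℝ) (f : (ℕ → ℝ) →ₗ[ℝ] ℝ) : Fin (K + 1) → ℝ :=
  fun i => (dStar K ω γ (dElt K ω γ) / dStar K ω γ (ω i)) * f (ω i)

/-!
By biorthogonality `d*` is the functional `y ↦ Σ_i γ*_i(y)·d*(ω_i)`; hence `d*(d) > 0`, the weights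
of `μ` cancel against the factors of `π`, and `‖π(x)‖₁ = Σ_i |γ*_i(x)|·d*(ω_i) = d*(|x|)`.
For the bound, the `j`-th summand of `d*(|x|)` is `Σ_i |γ*_i(x)|·|ω_i(j)|`, which is the `j`-th
coordinate of a sign change of `x` in the basis `ω`. A coordinate of a finitely supported sequence
is at most its James norm, the sign change costs at most the factor `B`, and the weights `2^{-j-1}`
sum to less than `1`.
-/

open Finset

section JamesNorm

variable {K : ℕ} {x : ℕ → ℝ}

lemma cyclic_sum_sq_sub_le {m : ℕ} (a : Fin (m + 1) → ℝ) :
    (∑ i : Fin m, (a i.castSucc - a i.succ) ^ 2) + (a (Fin.last m) - a 0) ^ 2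
      ≤ 4 * ∑ i, a i ^ 2 := by
  have hcast := Fin.sum_univ_castSucc fun i => a i ^ 2
  have hsucc := Fin.sum_univ_succ fun i => a i ^ 2
  have hterm : ∀ u v : ℝ, (u - v) ^ 2 ≤ 2 * u ^ 2 + 2 * v ^ 2 := fun u v => by
    nlinarith [sq_nonneg (u + v)]
  have hsum := sum_le_sum (s := univ) fun (i : Fin m) _ => hterm (a i.castSucc) (a i.succ)
  rw [sum_add_distrib, ← mul_sum, ← mul_sum] at hsum
  linarith [hterm (a (Fin.last m)) (a 0)]

lemma sum_sq_comp_le_of_injective (hx : ∀ j, K < j → x j = 0) {m : ℕ}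
    {p : Fin (m + 1) → ℕ} (hp : Function.Injective p) :
    ∑ i, x (p i) ^ 2 ≤ ∑ j ∈ range (K + 1), x j ^ 2 := by
  classical
  rw [← sum_image (g := p) (f := fun j => x j ^ 2) fun _ _ _ _ h => hp h]
  calc ∑ j ∈ univ.image p, x j ^ 2
      ≤ ∑ j ∈ range (K + 1) ∪ univ.image p, x j ^ 2 :=
        sum_le_sum_of_subset_of_nonneg subset_union_right fun _ _ _ => sq_nonneg _
    _ = ∑ j ∈ range (K + 1), x j ^ 2 := by
        refine (sum_subset subset_union_left fun j _ hj => ?_).symm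
        rw [hx j (by simp only [mem_range] at hj; omega)]
        ring

lemma bddAbove_jamesSet (hx : ∀ j, K < j → x j = 0) : BddAbove (jamesSet x) := by
  refine ⟨√(4 * ∑ j ∈ range (K + 1), x j ^ 2), ?_⟩
  rintro r ⟨m, p, hp, rfl⟩
  refine Real.sqrt_le_sqrt ((cyclic_sum_sq_sub_le (x ∘ p)).trans ?_)
  simpa using sum_sq_comp_le_of_injective hx hp.injective

lemma abs_apply_le_jamesNorm (hx : ∀ j, K < j → x j = 0) (j : ℕ) :
    |x j| ≤ jamesNorm x := by
  have hmem : √2 * |x j| ∈ jamesSet x := by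
    refine ⟨1, ![j, K + j + 1], ?_, ?_⟩
    · simp [Fin.strictMono_iff_lt_succ]
    · have hfar : x (K + j + 1) = 0 := hx _ (by omega)
      simp [hfar, ← two_mul, Real.sqrt_mul zero_le_two, Real.sqrt_sq_eq_abs]
  calc |x j| = (√2)⁻¹ * (√2 * |x j|) := by field_simp
    _ ≤ jamesNorm x := mul_le_mul_of_nonneg_left (le_csSup (bddAbove_jamesSet hx) hmem)
        (by positivity)

end JamesNorm

lemma sum_abs_mul_abs_apply_le_jamesNorm {K : ℕ} {ω : Fin (K + 1) → ℕ → ℝ} {B : ℝ}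
    (hω_supp : ∀ i, ∀ j, K < j → ω i j = 0)
    (hunc : ∀ (α ε : Fin (K + 1) → ℝ), (∀ i, ε i = 1 ∨ ε i = -1) →
      jamesNorm (∑ i, (ε i * α i) • ω i) ≤ B * jamesNorm (∑ i, α i • ω i))
    (α : Fin (K + 1) → ℝ) (n : ℕ) :
    ∑ i, |α i| * |ω i n| ≤ B * jamesNorm (∑ i, α i • ω i) := by
  set ε : Fin (K + 1) → ℝ := fun i => if 0 ≤ α i * ω i n then 1 else -1
  have hε : ∀ i, ε i = 1 ∨ ε i = -1 := fun i => by unfold ε; split_ifs <;> simp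
  set y : ℕ → ℝ := ∑ i, (ε i * α i) • ω i
  have hy_supp : ∀ j, K < j → y j = 0 := fun j hj => by
    simp [y, Finset.sum_apply, hω_supp _ _ hj]
  have hy_n : ∑ i, |α i| * |ω i n| = y n := by
    simp only [y, Finset.sum_apply, Pi.smul_apply, smul_eq_mul, ← abs_mul]
    refine sum_congr rfl fun i _ => ?_
    unfold ε
    split_ifs with h
    · rw [abs_of_nonneg h, one_mul]
    · rw [abs_of_neg (not_le.mp h)]; ring
  calc ∑ i, |α i| * |ω i n| = y n := hy_n
    _ ≤ jamesNorm y := (le_abs_self _).trans (abs_apply_le_jamesNorm hy_supp n)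
    _ ≤ B * jamesNorm (∑ i, α i • ω i) := hunc α ε hε

lemma sum_two_pow_inv_mul_le {n : ℕ} (s : Fin (n + 1) → ℝ) {M : ℝ} (hs₀ : ∀ j, 0 ≤ s j)
    (hs : ∀ j, s j ≤ M) : ∑ j : Fin (n + 1), ((2 : ℝ) ^ ((j : ℕ) + 1))⁻¹ * s j ≤ M := by
  have hgeom : ∑ j : Fin (n + 1), ((2 : ℝ) ^ ((j : ℕ) + 1))⁻¹ ≤ 1 := by
    have h : ∀ j : ℕ, ((2 : ℝ) ^ (j + 1))⁻¹ = (1 / 2) ^ j / 2 := fun j => by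
      rw [pow_succ, mul_inv, one_div, inv_pow, div_eq_mul_inv]
    rw [Fin.sum_univ_eq_sum_range (fun j => ((2 : ℝ) ^ (j + 1))⁻¹)]
    simp only [h, ← sum_div]
    linarith [sum_geometric_two_le (n + 1)]
  calc ∑ j : Fin (n + 1), ((2 : ℝ) ^ ((j : ℕ) + 1))⁻¹ * s j
      ≤ ∑ j : Fin (n + 1), ((2 : ℝ) ^ ((j : ℕ) + 1))⁻¹ * M :=
        sum_le_sum fun j _ => mul_le_mul_of_nonneg_left (hs j) (by positivity)
    _ ≤ M := by
        rw [← sum_mul]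
        exact mul_le_of_le_one_left ((hs₀ 0).trans (hs 0)) hgeom

lemma integral_sum_smul_dirac {α : Type*} [Fintype α] [MeasurableSpace α]
    [MeasurableSingletonClass α] {w : α → ℝ} (hw : ∀ a, 0 ≤ w a) (f : α → ℝ) :
    ∫ a, f a ∂(∑ a, ENNReal.ofReal (w a) • Measure.dirac a) = ∑ a, w a * f a := by
  rw [integral_finsetSum_measure fun a _ =>
    Integrable.of_finite.smul_measure ENNReal.ofReal_ne_top]
  simp [integral_smul_measure, integral_dirac, hw]

section Biorthogonal

variable {K : ℕ} {ω : Fin (K + 1) → ℕ → ℝ} {γ : Fin (K + 1) → (ℕ → ℝ) →ₗ[ℝ] ℝ}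
  (hdual : ∀ i i' : Fin (K + 1), γ i (ω i') = if i = i' then 1 else 0)
include hdual

lemma apply_sum_smul_of_dual (c : Fin (K + 1) → ℝ) (i : Fin (K + 1)) :
    γ i (∑ i', c i' • ω i') = c i := by
  simp [map_sum, hdual]

lemma apply_absVec (x : ℕ → ℝ) (i : Fin (K + 1)) : γ i (absVec K ω γ x) = |γ i x| :=
  apply_sum_smul_of_dual hdual _ i

lemma dStar_eq_sum (y : ℕ → ℝ) :
    dStar K ω γ y = ∑ i, γ i y * dStar K ω γ (ω i) := by
  have hω : ∀ i, dStar K ω γ (ω i) = ∑ j : Fin (K + 1), ((2 : ℝ) ^ ((j : ℕ) + 1))⁻¹ * |ω i j| :=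
    fun i => by simp [dStar, hdual]
  simp only [hω]
  unfold dStar
  simp only [mul_sum]
  rw [sum_comm]
  exact sum_congr rfl fun i _ => sum_congr rfl fun j _ => by ring

lemma dStar_dElt_pos (hγd : ∀ i, 0 < γ i (dElt K ω γ)) (hdω : ∀ i, 0 < dStar K ω γ (ω i)) :
    0 < dStar K ω γ (dElt K ω γ) := by
  rw [dStar_eq_sum hdual]
  exact sum_pos (fun i _ => mul_pos (hγd i) (hdω i)) univ_nonempty

lemma integral_abs_jPi (hγd : ∀ i, 0 < γ i (dElt K ω γ)) (hdω : ∀ i, 0 < dStar K ω γ (ω i))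
    (x : ℕ → ℝ) :
    ∫ i, |jPi K ω γ x i| ∂(jMeasure K ω γ) = ∑ i, |γ i x| * dStar K ω γ (ω i) := by
  have hd := dStar_dElt_pos hdual hγd hdω
  rw [jMeasure, integral_sum_smul_dirac fun i => (div_pos (mul_pos (hγd i) (hdω i)) hd).le]
  refine sum_congr rfl fun i _ => ?_
  rw [jPi, abs_mul, abs_of_pos (div_pos hd (hγd i))]
  field_simp [(hγd i).ne', hd.ne']

end Biorthogonal

theorem jPi_L1_norm_general
    (K : ℕ) (B : ℝ)
    (ω : Fin (K + 1) → ℕ → ℝ) (γ : Fin (K + 1) → (ℕ → ℝ) →ₗ[ℝ] ℝ)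
    (hω_supp : ∀ i, ∀ j, K < j → ω i j = 0)
    (hbasis : ∀ x : ℕ → ℝ, (∀ j, K < j → x j = 0) → (∑ i, γ i x • ω i) = x)
    (hdual : ∀ i i' : Fin (K + 1), γ i (ω i') = if i = i' then 1 else 0)
    (hunc : ∀ (α ε : Fin (K + 1) → ℝ), (∀ i, ε i = 1 ∨ ε i = -1) →
      jamesNorm (∑ i, (ε i * α i) • ω i) ≤ B * jamesNorm (∑ i, α i • ω i))
    (hγd : ∀ i, 0 < γ i (dElt K ω γ)) (hdω : ∀ i, 0 < dStar K ω γ (ω i))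
    (x : ℕ → ℝ) (hx : ∀ j, K < j → x j = 0) :
    (∫ i, |jPi K ω γ x i| ∂(jMeasure K ω γ)) = dStar K ω γ (absVec K ω γ x) ∧
      dStar K ω γ (absVec K ω γ x) ≤ B * jamesNorm x := by
  constructor
  · rw [integral_abs_jPi hdual hγd hdω, dStar_eq_sum hdual]
    simp only [apply_absVec hdual]
  · simp only [dStar, apply_absVec hdual]
    refine sum_two_pow_inv_mul_le _ (fun j => by positivity) fun j => ?_
    simpa only [hbasis x hx] using
      sum_abs_mul_abs_apply_le_jamesNorm hω_supp hunc (fun i => γ i x) j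

/-- `‖π(x)‖_{L¹(μ)} = d*(|x|) ≤ B·‖x‖_J` for every `x ∈ J_K`. -/
theorem jPi_L1_norm
    (K : ℕ) (B : ℝ) (hB : 1 ≤ B)
    (ω : Fin (K + 1) → ℕ → ℝ) (γ : Fin (K + 1) → (ℕ → ℝ) →ₗ[ℝ] ℝ)
    (hω_supp : ∀ i, ∀ j, K < j → ω i j = 0)
    (hγ_supp : ∀ i, ∀ x : ℕ → ℝ, (∀ j, j ≤ K → x j = 0) → γ i x = 0)
    (hbasis : ∀ x : ℕ → ℝ, (∀ j, K < j → x j = 0) → (∑ i, γ i x • ω i) = x)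
    (hdual : ∀ i i' : Fin (K + 1), γ i (ω i') = if i = i' then 1 else 0)
    (hunc : ∀ (α ε : Fin (K + 1) → ℝ), (∀ i, ε i = 1 ∨ ε i = -1) →
      jamesNorm (∑ i, (ε i * α i) • ω i) ≤ B * jamesNorm (∑ i, α i • ω i))
    (hγd : ∀ i, 0 < γ i (dElt K ω γ)) (hdω : ∀ i, 0 < dStar K ω γ (ω i))
    (x : ℕ → ℝ) (hx : ∀ j, K < j → x j = 0) :
    (∫ i, |jPi K ω γ x i| ∂(jMeasure K ω γ)) = dStar K ω γ (absVec K ω γ x) ∧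
      dStar K ω γ (absVec K ω γ x) ≤ B * jamesNorm x :=
  jPi_L1_norm_general K B ω γ hω_supp hbasis hdual hunc hγd hdω x hx
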